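/- Let G be a connected proper interval graph with a fixed compact proper interval representation on [0,P], and for a coloring col' of G and each index i with 0 ≤ i ≤ 2P let S_i(col') = { col'(v) : the interval of v contains the point i/2 }. For indices 0 ≤ ℓ ≤ r ≤ 2P, a color c ∈ C and a set S ⊆ C, let f(ℓ, r, c, S) be the minimum number t such that some sequence of t coloring operations applied to G yields a coloring col' satisfying (1) c ∈ S_i(col') for every i with ℓ ≤ i ≤ r, and (2) ∪_{ℓ ≤ i ≤ r} S_i(col') ⊆ S ∪ {c}. Then the minimum length of a solution of the free flooding game on G equals min over c ∈ C and S ⊆ C of f(0, 2P, c, S) + |S|. -/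

import Mathlib

open scoped Classical

/-- The set of vertices colored (and merged) by a coloring operation at `v`:
`v` together with all vertices in the same connected component as `v` in the
subgraph induced by the vertices of color `col v`. -/
def floodRegion {V C : Type*} (G : SimpleGraph V) (col : V → C) (v : V) : Set V :=
  {u | ∃ p : G.Walk v u, ∀ w ∈ p.support, col w = col v}

/-- The coloring operation `(v, c)`. -/
noncomputable def floodStep {V C : Type*} (G : SimpleGraph V) (col : V → C)
    (v : V) (c : C) : V → C :=
  fun u => if u ∈ floodRegion G col v then c else col u

/-- Applying a sequence of coloring operations. -/
noncomputable def floodSeq {V C : Type*} (G : SimpleGraph V) (col : V → C) :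
    List (V × C) → V → C
  | [] => col
  | op :: ops => floodSeq G (floodStep G col op.1 op.2) ops

/-- A sequence of coloring operations is a solution of the free flooding game if
applying it makes all vertices of `G` have the same color. -/
def IsFloodSolution {V C : Type*} (G : SimpleGraph V) (col : V → C)
    (ops : List (V × C)) : Prop :=
  ∃ c : C, ∀ u : V, floodSeq G col ops u = c

/-- `ptSet f i` is the set `N[i/2]` of vertices of the interval representation `f` (with
natural-number endpoints) whose interval `[(f v).1, (f v).2]` contains the half-integer
point `i/2`. -/
def ptSet {V : Type*} (f : V → ℕ × ℕ) (i : ℕ) : Set V :=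
  {v : V | 2 * (f v).1 ≤ i ∧ i ≤ 2 * (f v).2}

/-!
If a color `c` is present at every point `i/2`, the `c`-colored vertices form a single
monochromatic component, because vertices whose intervals contain consecutive points `i/2` and
`(i+1)/2` are equal or adjacent. Recoloring that component into a color `s ∈ S` makes `s` present
at every point and removes `c` everywhere, so `|S|` further moves make the graph monochromatic.
Conversely, a solution ending in color `c` is admissible for `f(0, 2P, c, ∅)`.
-/

open SimpleGraph

section

variable {V C : Type*}

lemma floodSeq_append (G : SimpleGraph V) (col : V → C) (ops₁ ops₂ : List (V × C)) :
    floodSeq G col (ops₁ ++ ops₂) = floodSeq G (floodSeq G col ops₁) ops₂ := by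
  induction ops₁ generalizing col with
  | nil => rfl
  | cons op ops ih => exact ih _

lemma isFloodSolution_append_iff (G : SimpleGraph V) (col : V → C) (ops₁ ops₂ : List (V × C)) :
    IsFloodSolution G col (ops₁ ++ ops₂) ↔ IsFloodSolution G (floodSeq G col ops₁) ops₂ := by
  rw [IsFloodSolution, IsFloodSolution, floodSeq_append]

section FloodRegion

variable (G : SimpleGraph V) (d : V → C) {u v w : V}

lemma self_mem_floodRegion : v ∈ floodRegion G d v :=
  ⟨.nil, by simp⟩

lemma floodRegion_symm (h : u ∈ floodRegion G d v) : v ∈ floodRegion G d u := by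
  obtain ⟨p, hp⟩ := h
  refine ⟨p.reverse, fun x hx => ?_⟩
  rw [hp x (by simpa using hx), hp u p.end_mem_support]

lemma floodRegion_trans (huv : u ∈ floodRegion G d v) (hwu : w ∈ floodRegion G d u) :
    w ∈ floodRegion G d v := by
  obtain ⟨p, hp⟩ := huv
  obtain ⟨q, hq⟩ := hwu
  refine ⟨p.append q, fun x hx => ?_⟩
  rcases (Walk.mem_support_append_iff p q).mp hx with hx | hx
  · exact hp x hx
  · rw [hq x hx, hp u p.end_mem_support]

lemma mem_floodRegion_of_adj (h : G.Adj v u) (hd : d u = d v) : u ∈ floodRegion G d v :=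
  ⟨h.toWalk, by simp [hd]⟩

lemma floodStep_of_mem {c : C} (h : u ∈ floodRegion G d v) : floodStep G d v c u = c :=
  if_pos h

lemma floodStep_of_notMem {c : C} (h : u ∉ floodRegion G d v) : floodStep G d v c u = d u :=
  if_neg h

lemma floodSeq_map_eq_of_mem_or_eq (c : C) (l : List V) (d : V → C) (u : V)
    (hu : u ∈ l ∨ d u = c) : floodSeq G d (l.map (·, c)) u = c := by
  induction l generalizing d with
  | nil => exact hu.resolve_left List.not_mem_nil
  | cons a l ih =>
    refine ih _ ?_
    rcases hu with hu | hu
    · rcases List.mem_cons.mp hu with rfl | hu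
      · exact .inr (floodStep_of_mem G d (self_mem_floodRegion G d))
      · exact .inl hu
    · right
      by_cases ha : u ∈ floodRegion G d a
      · exact floodStep_of_mem G d ha
      · rw [floodStep_of_notMem G d ha, hu]

lemma exists_floodSeq_eq_const [Fintype V] (c : C) : ∃ ops, ∀ u, floodSeq G d ops u = c :=
  ⟨Finset.univ.toList.map (·, c),
    fun u => floodSeq_map_eq_of_mem_or_eq G c _ d u (.inl (by simp))⟩

end FloodRegion

section IntervalRepresentation

variable {G : SimpleGraph V} {f : V → ℕ × ℕ} {P : ℕ} {d : V → C} {c : C}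

lemma mem_ptSet_two_mul_fst {v : V} (hle : (f v).1 ≤ (f v).2) : v ∈ ptSet f (2 * (f v).1) :=
  ⟨le_rfl, by omega⟩

lemma mem_floodRegion_of_mem_ptSet
    (hadj : ∀ u v, u ≠ v → max (f u).1 (f v).1 ≤ min (f u).2 (f v).2 → G.Adj u v)
    {u v : V} {i j : ℕ} (hv : v ∈ ptSet f i) (hu : u ∈ ptSet f j) (hij : i ≤ j)
    (hji : j ≤ i + 1) (hd : d u = d v) : u ∈ floodRegion G d v := by
  by_cases huv : v = u
  · exact huv ▸ self_mem_floodRegion G d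
  · refine mem_floodRegion_of_adj G d (hadj v u huv ?_) hd
    obtain ⟨hv₁, hv₂⟩ := hv
    obtain ⟨hu₁, hu₂⟩ := hu
    omega

lemma mem_floodRegion_of_forall_mem_image (hle : ∀ v, (f v).1 ≤ (f v).2) (hP : ∀ v, (f v).2 ≤ P)
    (hadj : ∀ u v, u ≠ v → max (f u).1 (f v).1 ≤ min (f u).2 (f v).2 → G.Adj u v)
    (hcov : ∀ i ≤ 2 * P, c ∈ d '' ptSet f i) {u v : V} (hu : d u = c) (hv : d v = c) :
    u ∈ floodRegion G d v := by
  have : Nonempty V := ⟨u⟩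
  have hcov' : ∀ i ≤ 2 * P, ∃ x ∈ ptSet f i, d x = c := hcov
  choose! g hg hgc using hcov'
  have hchain : ∀ i ≤ 2 * P, g i ∈ floodRegion G d (g 0) := by
    intro i hi
    induction i with
    | zero => exact self_mem_floodRegion G d
    | succ i ih =>
      refine floodRegion_trans G d (ih (by omega)) ?_
      exact mem_floodRegion_of_mem_ptSet hadj (hg i (by omega)) (hg (i + 1) hi) (by omega)
        le_rfl (by rw [hgc i (by omega), hgc (i + 1) hi])
  have hmem : ∀ x, d x = c → x ∈ floodRegion G d (g 0) := by
    intro x hx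
    have hi : 2 * (f x).1 ≤ 2 * P := by have := hle x; have := hP x; omega
    refine floodRegion_trans G d (hchain _ hi) (floodRegion_symm G d ?_)
    exact mem_floodRegion_of_mem_ptSet hadj (mem_ptSet_two_mul_fst (hle x)) (hg _ hi) le_rfl
      (by omega) (by rw [hgc _ hi, hx])
  exact floodRegion_trans G d (floodRegion_symm G d (hmem v hv)) (hmem u hu)

lemma exists_isFloodSolution_of_forall_mem_image (hle : ∀ v, (f v).1 ≤ (f v).2)
    (hP : ∀ v, (f v).2 ≤ P)
    (hadj : ∀ u v, u ≠ v → max (f u).1 (f v).1 ≤ min (f u).2 (f v).2 → G.Adj u v)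
    (T : Finset C) (d : V → C) (c : C) (hcov : ∀ i ≤ 2 * P, c ∈ d '' ptSet f i)
    (hrange : ∀ w, d w = c ∨ d w ∈ T) :
    ∃ ops : List (V × C), ops.length = T.card ∧ IsFloodSolution G d ops := by
  induction T using Finset.induction_on generalizing d c with
  | empty => exact ⟨[], rfl, c, fun u => (hrange u).resolve_right (Finset.notMem_empty _)⟩
  | insert s T hs ih =>
    obtain ⟨v, -, hv⟩ := hcov 0 (Nat.zero_le _)
    have hreg : ∀ w, d w = c → w ∈ floodRegion G d v :=
      fun w hw => mem_floodRegion_of_forall_mem_image hle hP hadj hcov hw hv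
    have hcov' : ∀ i ≤ 2 * P, s ∈ floodStep G d v s '' ptSet f i := by
      intro i hi
      obtain ⟨x, hx, hxc⟩ := hcov i hi
      exact ⟨x, hx, floodStep_of_mem G d (hreg x hxc)⟩
    have hrange' : ∀ w, floodStep G d v s w = s ∨ floodStep G d v s w ∈ T := by
      intro w
      by_cases hw : w ∈ floodRegion G d v
      · exact .inl (floodStep_of_mem G d hw)
      · rw [floodStep_of_notMem G d hw, ← Finset.mem_insert]
        exact (hrange w).resolve_left fun h => hw (hreg w h)
    obtain ⟨ops, hlen, hsol⟩ := ih _ s hcov' hrange'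
    exact ⟨(v, s) :: ops, by simp [hlen, Finset.card_insert_of_notMem hs], hsol⟩

lemma exists_isFloodSolution_length_eq_ncard [Finite C] (hle : ∀ v, (f v).1 ≤ (f v).2)
    (hP : ∀ v, (f v).2 ≤ P)
    (hadj : ∀ u v, u ≠ v → max (f u).1 (f v).1 ≤ min (f u).2 (f v).2 → G.Adj u v)
    {S : Set C} (hcov : ∀ i ≤ 2 * P, c ∈ d '' ptSet f i)
    (hrange : ∀ i ≤ 2 * P, d '' ptSet f i ⊆ insert c S) :
    ∃ ops : List (V × C), ops.length = S.ncard ∧ IsFloodSolution G d ops := by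
  rw [Set.ncard_eq_toFinset_card S]
  refine exists_isFloodSolution_of_forall_mem_image hle hP hadj _ d c hcov fun w => ?_
  have hi : 2 * (f w).1 ≤ 2 * P := by have := hle w; have := hP w; omega
  simpa using hrange _ hi ⟨w, mem_ptSet_two_mul_fst (hle w), rfl⟩

lemma forall_mem_image_ptSet_of_const (hnonempty : ∀ i ≤ 2 * P, (ptSet f i).Nonempty)
    (hd : ∀ u, d u = c) (S : Set C) :
    (∀ i ≤ 2 * P, c ∈ d '' ptSet f i) ∧ ∀ i ≤ 2 * P, d '' ptSet f i ⊆ insert c S := by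
  obtain rfl : d = fun _ => c := funext hd
  refine ⟨fun i hi => ?_, fun i hi => ?_⟩ <;> rw [(hnonempty i hi).image_const]
  exacts [rfl, Set.singleton_subset_iff.mpr (Set.mem_insert c S)]

end IntervalRepresentation

/-- `sInf (coverLengths G col f P c S)` is the quantity `f(0, 2P, c, S)` of the statement. -/
def coverLengths (G : SimpleGraph V) (col : V → C) (f : V → ℕ × ℕ) (P : ℕ) (c : C)
    (S : Set C) : Set ℕ :=
  {t | ∃ ops : List (V × C), ops.length = t ∧
    (∀ i ≤ 2 * P, c ∈ floodSeq G col ops '' ptSet f i) ∧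
    (∀ i ≤ 2 * P, floodSeq G col ops '' ptSet f i ⊆ insert c S)}

lemma coverLengths_nonempty [Fintype V] (G : SimpleGraph V) (col : V → C) {f : V → ℕ × ℕ}
    {P : ℕ} (hnonempty : ∀ i ≤ 2 * P, (ptSet f i).Nonempty) (c : C) (S : Set C) :
    (coverLengths G col f P c S).Nonempty :=
  let ⟨ops, hops⟩ := exists_floodSeq_eq_const G col c
  ⟨_, ops, rfl, forall_mem_image_ptSet_of_const hnonempty hops S⟩

end

theorem properInterval_flood_min_length_eq_general
    {V C : Type*} [Fintype V] [Fintype C]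
    (G : SimpleGraph V) (col : V → C)
    (P : ℕ) (f : V → ℕ × ℕ)
    (hle : ∀ v : V, (f v).1 ≤ (f v).2)
    (hP : ∀ v : V, (f v).2 ≤ P)
    (hadj : ∀ u v : V, u ≠ v →
      (G.Adj u v ↔ max (f u).1 (f v).1 ≤ min (f u).2 (f v).2))
    (hnonempty : ∀ i ≤ 2 * P, (ptSet f i).Nonempty) :
    sInf {t : ℕ | ∃ ops : List (V × C), ops.length = t ∧ IsFloodSolution G col ops} =
    sInf {n : ℕ | ∃ (c : C) (S : Set C),
      n = sInf {t : ℕ | ∃ ops : List (V × C), ops.length = t ∧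
            (∀ i ≤ 2 * P, c ∈ floodSeq G col ops '' ptSet f i) ∧
            (∀ i ≤ 2 * P, floodSeq G col ops '' ptSet f i ⊆ insert c S)}
          + S.ncard} := by
  change _ = sInf {n | ∃ (c : C) (S : Set C), n = sInf (coverLengths G col f P c S) + S.ncard}
  apply csInf_eq_csInf_of_forall_exists_le
  · rintro _ ⟨ops, rfl, c, hc⟩
    refine ⟨_, ⟨c, ∅, rfl⟩, ?_⟩
    have hops : ops.length ∈ coverLengths G col f P c ∅ :=
      ⟨ops, rfl, forall_mem_image_ptSet_of_const hnonempty hc ∅⟩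
    simpa using Nat.sInf_le hops
  · rintro _ ⟨c, S, rfl⟩
    obtain ⟨ops, hlen, hcov, hrange⟩ := Nat.sInf_mem (coverLengths_nonempty G col hnonempty c S)
    obtain ⟨extra, hextra, hsol⟩ := exists_isFloodSolution_length_eq_ncard hle hP
      (fun u v huv => (hadj u v huv).mpr) hcov hrange
    refine ⟨_, ⟨ops ++ extra, rfl, (isFloodSolution_append_iff G col ops extra).mpr hsol⟩, ?_⟩
    simp [hlen, hextra]

/-- Let `G` be a connected precolored proper interval graph with a fixed
compact proper interval representation `f` on `[0, P]` (integer endpoints, adjacency iff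
intersection, no proper containment of intervals, `N[p] ≠ N[p+1]` for `0 ≤ p < P`, and
all point sets `N[i/2]`, `0 ≤ i ≤ 2P`, nonempty).  For a coloring `col'` let
`S_i(col') = col' '' N[i/2]` be the set of colors present at the point `i/2`, and for
`c : C`, `S : Set C` let `f(0, 2P, c, S)` be the minimum number of coloring operations
producing a coloring `col'` with `c ∈ S_i(col')` and `S_i(col') ⊆ S ∪ {c}` for every
`0 ≤ i ≤ 2P`.  Then the minimum length of a solution of the free flooding game on `G`
equals `min_{c ∈ C, S ⊆ C} (f(0, 2P, c, S) + |S|)`. -/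
theorem properInterval_flood_min_length_eq
    {V C : Type*} [Fintype V] [Fintype C]
    (G : SimpleGraph V) (hG : G.Connected) (col : V → C)
    (P : ℕ) (f : V → ℕ × ℕ)
    (hle : ∀ v : V, (f v).1 ≤ (f v).2)
    (hP : ∀ v : V, (f v).2 ≤ P)
    (hadj : ∀ u v : V, u ≠ v →
      (G.Adj u v ↔ max (f u).1 (f v).1 ≤ min (f u).2 (f v).2))
    (hproper : ∀ u v : V, (f v).1 ≤ (f u).1 → (f u).2 ≤ (f v).2 →
      (f u).1 = (f v).1 ∧ (f u).2 = (f v).2)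
    (hcompact : ∀ p : ℕ, p < P →
      {v : V | (f v).1 ≤ p ∧ p ≤ (f v).2} ≠ {v : V | (f v).1 ≤ p + 1 ∧ p + 1 ≤ (f v).2})
    (hnonempty : ∀ i ≤ 2 * P, (ptSet f i).Nonempty) :
    sInf {t : ℕ | ∃ ops : List (V × C), ops.length = t ∧ IsFloodSolution G col ops} =
    sInf {n : ℕ | ∃ (c : C) (S : Set C),
      n = sInf {t : ℕ | ∃ ops : List (V × C), ops.length = t ∧
            (∀ i ≤ 2 * P, c ∈ floodSeq G col ops '' ptSet f i) ∧
            (∀ i ≤ 2 * P, floodSeq G col ops '' ptSet f i ⊆ insert c S)}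
          + S.ncard} :=
  properInterval_flood_min_length_eq_general G col P f hle hP hadj hnonempty
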